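/- Let y be an involution in S_n and w a permutation in its atom set A(y). Then for every cycle (i,j) of y with i ≤ j, we have w(i) ≥ w(j), and there is no k with i < k < j and w(i) > w(k) > w(j). -/

import Mathlib

open scoped Classical

noncomputable section

/-- The simple transposition `s_i` in `S_n` (0-indexed: swaps `i` and `i+1`). -/
def simpleT (n i : ℕ) : Equiv.Perm (Fin n) :=
  if h : i + 1 < n then Equiv.swap ⟨i, Nat.lt_of_succ_lt h⟩ ⟨i + 1, h⟩ else 1

/-- The product of the word `l` of simple transpositions. -/
def wordProd (n : ℕ) (l : List ℕ) : Equiv.Perm (Fin n) :=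
  (l.map (simpleT n)).prod

/-- The Coxeter length of a permutation: minimal length of a word of simple
transpositions with product `w`. -/
def len (n : ℕ) (w : Equiv.Perm (Fin n)) : ℕ :=
  sInf {p | ∃ l : List ℕ, l.length = p ∧ wordProd n l = w}

/-- One step of the (right) Demazure / 0-Hecke product: `w ∘ s_i`. -/
def demStepR (n : ℕ) (w : Equiv.Perm (Fin n)) (i : ℕ) : Equiv.Perm (Fin n) :=
  if len n w < len n (w * simpleT n i) then w * simpleT n i else w

/-- One step of the (left) Demazure / 0-Hecke product: `s_i ∘ w`. -/
def demStepL (n i : ℕ) (w : Equiv.Perm (Fin n)) : Equiv.Perm (Fin n) :=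
  if len n w < len n (simpleT n i * w) then simpleT n i * w else w

/-- The Demazure product of the word `l`: `s_{a_1} ∘ s_{a_2} ∘ ⋯ ∘ s_{a_p}`. -/
def demWord (n : ℕ) (l : List ℕ) : Equiv.Perm (Fin n) :=
  l.foldl (demStepR n) 1

/-- `w⁻¹ ∘ w = y` for the Demazure product: expressed via a reduced word `l` of `w`,
as `demWord (l.reverse ++ l) = y` (note `l.reverse` is a reduced word of `w⁻¹`). -/
def DemSelf (n : ℕ) (w y : Equiv.Perm (Fin n)) : Prop :=
  ∃ l : List ℕ, wordProd n l = w ∧ l.length = len n w ∧ demWord n (l.reverse ++ l) = y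

/-- `w` is an atom of the involution `y`: a minimal-length permutation with
`w⁻¹ ∘ w = y` under the Demazure product. -/
def IsAtomOf (n : ℕ) (y w : Equiv.Perm (Fin n)) : Prop :=
  DemSelf n w y ∧ ∀ w', DemSelf n w' y → len n w ≤ len n w'

/-- The number of cycles (2-cycles together with fixed points) of an involution `y`. -/
def cycCount (n : ℕ) (y : Equiv.Perm (Fin n)) : ℕ :=
  (Finset.univ.filter fun i : Fin n => i ≤ y i).card

/-- The minimal length of an involution word for `y`
(`y = s_{a_1} ⊳ ⋯ ⊳ s_{a_p}`, equivalently `y = demWord (a.reverse ++ a)`). -/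
def ihat (n : ℕ) (y : Equiv.Perm (Fin n)) : ℕ :=
  sInf {p | ∃ a : List ℕ, a.length = p ∧ demWord n (a.reverse ++ a) = y}

/-- Bruhat order on `S_n` via the subword property. -/
def BruhatLE (n : ℕ) (u v : Equiv.Perm (Fin n)) : Prop :=
  ∀ l : List ℕ, wordProd n l = v → l.length = len n v →
    ∃ l' : List ℕ, l'.Sublist l ∧ wordProd n l' = u ∧ l'.length = len n u

/-- `y` standardizes (as a word `b` on a finite alphabet of naturals) to the
permutation `y` of positions: `y i` is the rank of the letter `b i`. -/
def stdEq {k : ℕ} (b : Fin k → ℕ) (y : Equiv.Perm (Fin k)) : Prop :=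
  Function.Injective b ∧
    ∀ i, (y i : ℕ) = (Finset.univ.filter fun j => b j < b i).card

/-- `q` is an inverse block atom of the block involution `b`: a word on the same
alphabet whose standardization is an inverse atom of `std b`. -/
def IsInvBlockAtomOf {k : ℕ} (b q : Fin k → ℕ) : Prop :=
  Set.range q = Set.range b ∧
    ∃ y w : Equiv.Perm (Fin k), stdEq b y ∧ y * y = 1 ∧ stdEq q w ∧ IsAtomOf k y w⁻¹

/-- Positions `p` and `q` (0-indexed) lie in the same block of the composition `μ`. -/
def SameBlock (μ : List ℕ) (p q : ℕ) : Prop :=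
  ∀ k ≤ μ.length, ((μ.take k).sum ≤ p ↔ (μ.take k).sum ≤ q)

/-- The starting position (0-indexed) of the block of `μ` containing position `p`. -/
def blockStart (μ : List ℕ) (p : ℕ) : ℕ :=
  (Finset.range (μ.length + 1)).sup fun k =>
    if (μ.take k).sum ≤ p then (μ.take k).sum else 0

/-- The 0-Hecke action `π ∘_μ s_i` on `μ`-involutions: if the values `i, i+1` of `π`
lie in different blocks it is `s_i ∘ π`; if they lie in the same block `B` it is
`s_i ∘ π ∘ s_r`, where `r` is the position (global, 0-indexed) within the block
corresponding to the relative value of `i` in `B`. -/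
def muAct (n : ℕ) (μ : List ℕ) (π : Equiv.Perm (Fin n)) (i : ℕ) : Equiv.Perm (Fin n) :=
  if h : i + 1 < n then
    let a : Fin n := ⟨i, Nat.lt_of_succ_lt h⟩
    let b : Fin n := ⟨i + 1, h⟩
    if SameBlock μ ((π⁻¹ a : Fin n) : ℕ) ((π⁻¹ b : Fin n) : ℕ) then
      demStepR n (demStepL n i π)
        (blockStart μ ((π⁻¹ a : Fin n) : ℕ) +
          (Finset.univ.filter fun p' : Fin n =>
            SameBlock μ (p' : ℕ) ((π⁻¹ a : Fin n) : ℕ) ∧ (π p' : ℕ) < i).card)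
    else demStepL n i π
  else π

/-- `e ∘_μ s_{a_1} ∘_μ ⋯ ∘_μ s_{a_p}` for a word `l = (a_1, …, a_p)`. -/
def muWord (n : ℕ) (μ : List ℕ) (l : List ℕ) : Equiv.Perm (Fin n) :=
  l.foldl (muAct n μ) 1

/-- `ℓ_μ(π)`: the minimal length of a `μ`-word for `π`. -/
def lmu (n : ℕ) (μ : List ℕ) (π : Equiv.Perm (Fin n)) : ℕ :=
  sInf {p | ∃ l : List ℕ, l.length = p ∧ muWord n μ l = π}

/-- The `i`-th block of the one-line notation of `π` with respect to `μ`, as a word. -/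
def blockWord (n : ℕ) (μ : List ℕ) (π : Equiv.Perm (Fin n)) (i : Fin μ.length) :
    Fin (μ.get i) → ℕ :=
  fun j =>
    if h : (μ.take (i : ℕ)).sum + (j : ℕ) < n then
      (π ⟨(μ.take (i : ℕ)).sum + (j : ℕ), h⟩ : ℕ)
    else 0

/-- `π` is a `μ`-involution: `μ` is a composition of `n` and every block of `π`
standardizes to an involution. -/
def IsMuInv (n : ℕ) (μ : List ℕ) (π : Equiv.Perm (Fin n)) : Prop :=
  μ.sum = n ∧ (∀ x ∈ μ, 0 < x) ∧
    ∀ i : Fin μ.length,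
      ∃ y : Equiv.Perm (Fin (μ.get i)), stdEq (blockWord n μ π i) y ∧ y * y = 1

/-- `w` is a `μ`-atom of `π`: a minimal-length permutation one of whose reduced words
is a reduced `μ`-word for `π`. -/
def IsMuAtom (n : ℕ) (μ : List ℕ) (π w : Equiv.Perm (Fin n)) : Prop :=
  ∃ l : List ℕ, wordProd n l = w ∧ l.length = len n w ∧
    muWord n μ l = π ∧ l.length = lmu n μ π

/-- `ν` refines `μ`: every partial sum of `μ` is a partial sum of `ν`. -/
def Refines (ν μ : List ℕ) : Prop :=
  ∀ k ≤ μ.length, ∃ k' ≤ ν.length, (ν.take k').sum = (μ.take k).sum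

/-- `μ`-Bruhat order via the subword property on reduced `μ`-words. -/
def MuBruhatLE (n : ℕ) (μ : List ℕ) (π τ : Equiv.Perm (Fin n)) : Prop :=
  ∀ l : List ℕ, muWord n μ l = τ → l.length = lmu n μ τ →
    ∃ l' : List ℕ, l'.Sublist l ∧ muWord n μ l' = π ∧ l'.length = lmu n μ π

/-- The longest element `w_0` of `S_n`. -/
def longest (n : ℕ) : Equiv.Perm (Fin n) :=
  ⟨Fin.rev, Fin.rev, Fin.rev_rev, Fin.rev_rev⟩

/-- The divided difference operator `∂_i f = (f - s_i f)/(x_i - x_{i+1})`. -/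
def ddiff (n i : ℕ) (f : MvPolynomial (Fin n) ℚ) : MvPolynomial (Fin n) ℚ :=
  if h : ∃ hi : i + 1 < n, ∃ g : MvPolynomial (Fin n) ℚ,
      f - MvPolynomial.rename (⇑(simpleT n i)) f =
        g * (MvPolynomial.X (⟨i, Nat.lt_of_succ_lt hi⟩ : Fin n) -
          MvPolynomial.X (⟨i + 1, hi⟩ : Fin n))
  then h.choose_spec.choose else 0

/-- A choice of reduced word for `v`. -/
def aRedWord (n : ℕ) (v : Equiv.Perm (Fin n)) : List ℕ :=
  if h : ∃ l : List ℕ, wordProd n l = v ∧ l.length = len n v then h.choose else []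

/-- The Schubert polynomial of `w`: obtained from the staircase monomial
`S_{w_0} = x_1^{n-1} ⋯ x_{n-1}` by applying divided differences along a reduced
word of `w_0 w` (so that `w_0 · s_{a_1} ⋯ s_{a_p} = w`). -/
def schubert (n : ℕ) (w : Equiv.Perm (Fin n)) : MvPolynomial (Fin n) ℚ :=
  (aRedWord n (longest n * w)).foldl (fun f i => ddiff n i f)
    (∏ i : Fin n, MvPolynomial.X i ^ (n - 1 - (i : ℕ)))

/-- The involution Schubert polynomial `S^I_y = ∑_{w ∈ A(y)} S_w`. -/
def invSchubert (n : ℕ) (y : Equiv.Perm (Fin n)) : MvPolynomial (Fin n) ℚ :=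
  ∑ w ∈ Finset.univ.filter (fun w => IsAtomOf n y w), schubert n w

/-- The `μ`-involution Schubert polynomial `S^μ_π = ∑_{w ∈ A_μ(π)} S_w`. -/
def muSchubert (n : ℕ) (μ : List ℕ) (π : Equiv.Perm (Fin n)) : MvPolynomial (Fin n) ℚ :=
  ∑ w ∈ Finset.univ.filter (fun w => IsMuAtom n μ π w), schubert n w

/-- The parabolic (Young) subgroup `S_μ ≤ S_n`, generated by the simple
transpositions not crossing a block boundary of `μ`. -/
def parabolic (n : ℕ) (μ : List ℕ) : Subgroup (Equiv.Perm (Fin n)) :=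
  Subgroup.closure
    {g | ∃ i : ℕ, i + 1 < n ∧ (∀ k ≤ μ.length, (μ.take k).sum ≠ i + 1) ∧ g = simpleT n i}

/-- `z = t^I_{ab}(y)` nontrivially, encoded via atoms: some atom `v` of `y` satisfies
`v ⋖ v t_{ab}` and `v t_{ab}` is an atom of `z`. -/
def tOpI (n : ℕ) (y z : Equiv.Perm (Fin n)) (a b : Fin n) : Prop :=
  ∃ v : Equiv.Perm (Fin n), IsAtomOf n y v ∧
    len n (v * Equiv.swap a b) = len n v + 1 ∧ IsAtomOf n z (v * Equiv.swap a b)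

/-- The local move on one-line notations: a consecutive subsequence `c, a, b`
(with `a < b < c`) of `u` is replaced by `b, c, a` in `v`, all other entries equal. -/
def LocalMove (n : ℕ) (u v : Equiv.Perm (Fin n)) : Prop :=
  ∃ p : ℕ, ∃ hp : p + 2 < n, ∃ a b c : Fin n, a < b ∧ b < c ∧
    u ⟨p, by omega⟩ = c ∧ u ⟨p + 1, by omega⟩ = a ∧ u ⟨p + 2, hp⟩ = b ∧
    v ⟨p, by omega⟩ = b ∧ v ⟨p + 1, by omega⟩ = c ∧ v ⟨p + 2, hp⟩ = a ∧
    ∀ q : Fin n, (q : ℕ) ≠ p → (q : ℕ) ≠ p + 1 → (q : ℕ) ≠ p + 2 → u q = v q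

/-- The values `x, x'` form a (non-fixed-point) block cycle of the word `b`. -/
def Paired (m : ℕ) (b : Fin m → ℕ) (x x' : ℕ) : Prop :=
  ∃ y : Equiv.Perm (Fin m), stdEq b y ∧ ∃ i : Fin m, b i = x ∧ b (y i) = x' ∧ y i ≠ i

/-- `q` is an inverse block atom of the block involution obtained from `b` by
restricting its cycle structure to the value set of `q` (with unmatched values
becoming fixed points). -/
def RestrictedInvBlockAtom (m : ℕ) (b : Fin m → ℕ) (k : ℕ) (q : Fin k → ℕ) : Prop :=
  ∃ bL : Fin k → ℕ, ∃ yL : Equiv.Perm (Fin k),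
    stdEq bL yL ∧ yL * yL = 1 ∧ Set.range bL = Set.range q ∧
    (∀ i j : Fin k, (yL i = j ∧ i ≠ j) ↔ Paired m b (bL i) (bL j)) ∧
    IsInvBlockAtomOf bL q

end

/-!
Along a reduced word `l ++ [a]` of an atom `w` of `y` we have `w = w' s_a` with `w'(a) < w'(a+1)`,
and `y` arises from the involution `z = demWord (l.reverse ++ l)` by the two-sided Demazure step
`s_a ∘ z ∘ s_a`: this is `z` if `z(a) > z(a+1)`, `z s_a` if `z` fixes `a` and `a+1`, and `s_a z s_a`
otherwise. The two conditions of the theorem do not survive these steps on their own, so the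
induction on the length of `w` carries the stronger conditions `CycleCompatible w y` on pairs of
cycles of `y`. Minimality of `w` excludes the first case, and in the other two it makes `w'` an atom
of `z`: an atom `v` of `z` is compatible with `z`, hence has an ascent at `a` as `z` does, so that
`v s_a` competes with `w`.
-/

open Equiv Finset

theorem Equiv.Perm.apply_apply_of_mul_self {α : Type*} {z : Perm α} (hz : z * z = 1) (x : α) :
    z (z x) = x := by
  rw [← Perm.mul_apply, hz, Perm.one_apply]

section LinearOrder

variable {α : Type*} [LinearOrder α] {a a' b b' x y : α}

theorem Equiv.Perm.apply_min_eq_max_of_mul_self {z : Perm α} (hz : z * z = 1) (x : α) :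
    z (min x (z x)) = max x (z x) := by
  rcases le_total x (z x) with hx | hx
  · rw [min_eq_left hx, max_eq_right hx]
  · rw [min_eq_right hx, max_eq_left hx, Perm.apply_apply_of_mul_self hz]

theorem swap_lt_swap_of_covBy (hab : a ⋖ b) (hxy : x < y) (hne : ¬(x = a ∧ y = b)) :
    swap a b x < swap a b y := by
  rcases eq_or_ne x a with rfl | hxa
  · have hyb : y ≠ b := fun h => hne ⟨rfl, h⟩
    rw [swap_apply_left, swap_apply_of_ne_of_ne hxy.ne' hyb]
    exact (hab.ge_of_gt hxy).lt_of_ne hyb.symm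
  rcases eq_or_ne x b with rfl | hxb
  · rw [swap_apply_right, swap_apply_of_ne_of_ne (hab.1.trans hxy).ne' hxy.ne']
    exact hab.1.trans hxy
  rw [swap_apply_of_ne_of_ne hxa hxb]
  rcases eq_or_ne y a with rfl | hya
  · rw [swap_apply_left]
    exact hxy.trans hab.1
  rcases eq_or_ne y b with rfl | hyb
  · rw [swap_apply_right]
    exact (hab.le_of_lt hxy).lt_of_ne hxa
  rwa [swap_apply_of_ne_of_ne hya hyb]

theorem swap_lt_swap_or_of_covBy (hab : a ⋖ b) (hxy : x < y) :
    swap a b x < swap a b y ∨ x = a ∧ y = b := by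
  by_cases h : x = a ∧ y = b
  · exact Or.inr h
  · exact Or.inl (swap_lt_swap_of_covBy hab hxy h)

theorem swap_lt_swap_iff_of_covBy (hab : a ⋖ b) (hxy : x ≠ y) (hne : ¬(x = b ∧ y = a)) :
    swap a b x < swap a b y ↔ x < y ∧ ¬(x = a ∧ y = b) := by
  refine ⟨fun h => ⟨?_, ?_⟩, fun h => swap_lt_swap_of_covBy hab h.1 h.2⟩
  · refine lt_of_le_of_ne (not_lt.1 fun hyx => ?_) hxy
    exact h.not_gt (swap_lt_swap_of_covBy hab hyx fun h' => hne ⟨h'.2, h'.1⟩)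
  · rintro ⟨rfl, rfl⟩
    simp only [swap_apply_left, swap_apply_right] at h
    exact h.not_gt hab.1

theorem swap_mul_apply_lt_iff_of_covBy {u : Perm α} (ha : a ⋖ a') (hb : b ⋖ b')
    (hu : u⁻¹ a < u⁻¹ a') :
    (swap a a' * u) b < (swap a a' * u) b' ↔ u b < u b' ∧ ¬(u b = a ∧ u b' = a') := by
  rw [Perm.mul_apply, Perm.mul_apply]
  refine swap_lt_swap_iff_of_covBy ha (u.injective.ne hb.1.ne) fun ⟨h₁, h₂⟩ => ?_
  rw [Perm.inv_eq_iff_eq.2 h₂.symm, Perm.inv_eq_iff_eq.2 h₁.symm] at hu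
  exact hu.not_gt hb.1

variable [Fintype α]

def inversions (w : Perm α) : Finset (α × α) :=
  {p | p.1 < p.2 ∧ w p.2 < w p.1}

theorem mem_inversions {w : Perm α} {p : α × α} :
    p ∈ inversions w ↔ p.1 < p.2 ∧ w p.2 < w p.1 := by
  simp [inversions]

@[simp]
theorem inversions_one : inversions (1 : Perm α) = ∅ := by
  ext p
  simpa [mem_inversions] using fun h => h.le

theorem card_inversions_inv (w : Perm α) : #(inversions w⁻¹) = #(inversions w) := by
  refine card_nbij' (fun p => (w⁻¹ p.2, w⁻¹ p.1)) (fun p => (w p.2, w p.1)) ?_ ?_ ?_ ?_ <;>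
    simp +contextual [Set.MapsTo, Set.LeftInvOn, mem_inversions]

theorem swap_mem_inversions_mul_swap {w : Perm α} (hab : a ⋖ b) {p : α × α}
    (hp : p ∈ (inversions w).erase (a, b)) :
    (swap a b p.1, swap a b p.2) ∈ (inversions (w * swap a b)).erase (a, b) := by
  obtain ⟨hne, hp⟩ := mem_erase.1 hp
  rw [mem_inversions] at hp
  refine mem_erase.2 ⟨fun h => ?_, mem_inversions.2 ⟨?_, ?_⟩⟩
  · have h1 : p.1 = b := by simpa [swap_apply_eq_iff] using congrArg Prod.fst h
    have h2 : p.2 = a := by simpa [swap_apply_eq_iff] using congrArg Prod.snd h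
    exact hab.1.not_gt (h1 ▸ h2 ▸ hp.1)
  · exact swap_lt_swap_of_covBy hab hp.1 fun h => hne (Prod.ext h.1 h.2)
  · simpa using hp.2

theorem card_inversions_mul_swap {w : Perm α} (hab : a ⋖ b) (h : w a < w b) :
    #(inversions (w * swap a b)) = #(inversions w) + 1 := by
  have hmem : (a, b) ∈ inversions (w * swap a b) := by
    simpa [mem_inversions] using ⟨hab.1, h⟩
  have hnmem : (a, b) ∉ inversions w := by
    simpa [mem_inversions] using fun _ => h.le
  have : #((inversions (w * swap a b)).erase (a, b)) = #((inversions w).erase (a, b)) := by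
    refine card_nbij' (fun p => (swap a b p.1, swap a b p.2))
      (fun p => (swap a b p.1, swap a b p.2)) (fun p hp => ?_)
      (fun p hp => swap_mem_inversions_mul_swap hab hp) ?_ ?_
    · have := swap_mem_inversions_mul_swap (w := w * swap a b) hab hp
      rwa [mul_assoc, swap_mul_self, mul_one] at this
    · simp [Set.LeftInvOn]
    · simp [Set.LeftInvOn]
  rw [← card_erase_add_one hmem, this, erase_eq_of_notMem hnmem]

end LinearOrder

section Length

variable {n a : ℕ} {w : Perm (Fin n)}

theorem simpleT_eq_swap (ha : a + 1 < n) : simpleT n a = swap ⟨a, by omega⟩ ⟨a + 1, ha⟩ :=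
  dif_pos ha

theorem simpleT_of_not_lt (ha : ¬a + 1 < n) : simpleT n a = 1 :=
  dif_neg ha

theorem simpleT_mul_self : simpleT n a * simpleT n a = 1 := by
  by_cases ha : a + 1 < n
  · rw [simpleT_eq_swap ha, swap_mul_self]
  · rw [simpleT_of_not_lt ha, mul_one]

theorem simpleT_inv : (simpleT n a)⁻¹ = simpleT n a :=
  inv_eq_of_mul_eq_one_right simpleT_mul_self

theorem covBy_mk_succ (ha : a + 1 < n) : (⟨a, by omega⟩ : Fin n) ⋖ ⟨a + 1, ha⟩ :=
  ⟨Fin.lt_def.2 (Nat.lt_succ_self a), fun c h₁ h₂ => by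
    rw [Fin.lt_def] at h₁ h₂
    simp only at h₁ h₂
    omega⟩

theorem wordProd_concat (l : List ℕ) (a : ℕ) :
    wordProd n (l ++ [a]) = wordProd n l * simpleT n a := by
  simp [wordProd]

theorem exists_descent_of_ne_one (hw : w ≠ 1) :
    ∃ a, ∃ ha : a + 1 < n, w ⟨a + 1, ha⟩ < w ⟨a, by omega⟩ := by
  by_contra! h
  refine hw (DFunLike.coe_injective ?_)
  obtain _ | m := n
  · exact funext fun x => x.elim0
  refine StrictMono.eq_id (Fin.strictMono_iff_lt_succ.2 fun i => ?_)
  exact lt_of_le_of_ne (h i (by omega)) (w.injective.ne (Fin.ne_of_val_ne (by simp)))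

theorem card_inversions_mul_simpleT_of_lt (ha : a + 1 < n)
    (h : w ⟨a, by omega⟩ < w ⟨a + 1, ha⟩) :
    #(inversions (w * simpleT n a)) = #(inversions w) + 1 := by
  rw [simpleT_eq_swap ha]
  exact card_inversions_mul_swap (covBy_mk_succ ha) h

theorem card_inversions_mul_simpleT_of_gt (ha : a + 1 < n)
    (h : w ⟨a + 1, ha⟩ < w ⟨a, by omega⟩) :
    #(inversions (w * simpleT n a)) + 1 = #(inversions w) := by
  have h' : (w * simpleT n a) ⟨a, by omega⟩ < (w * simpleT n a) ⟨a + 1, ha⟩ := by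
    simpa [simpleT_eq_swap ha] using h
  rw [← card_inversions_mul_simpleT_of_lt ha h', mul_assoc, simpleT_mul_self, mul_one]

theorem card_inversions_mul_simpleT_le (w : Perm (Fin n)) (a : ℕ) :
    #(inversions (w * simpleT n a)) ≤ #(inversions w) + 1 := by
  by_cases ha : a + 1 < n
  · rcases lt_or_gt_of_ne (w.injective.ne (covBy_mk_succ ha).1.ne) with h | h
    · rw [card_inversions_mul_simpleT_of_lt ha h]
    · rw [← card_inversions_mul_simpleT_of_gt ha h]
      omega
  · rw [simpleT_of_not_lt ha, mul_one]
    omega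

theorem card_inversions_le_length {l : List ℕ} (h : wordProd n l = w) :
    #(inversions w) ≤ l.length := by
  subst h
  induction l using List.reverseRecOn with
  | nil => simp [wordProd]
  | append_singleton l a ih =>
    rw [wordProd_concat, List.length_append, List.length_singleton]
    exact (card_inversions_mul_simpleT_le _ a).trans (by omega)

theorem exists_wordProd_length_eq_card_inversions (w : Perm (Fin n)) :
    ∃ l, wordProd n l = w ∧ l.length = #(inversions w) := by
  induction h : #(inversions w) generalizing w with
  | zero =>
    refine ⟨[], ?_, rfl⟩
    by_contra hw
    obtain ⟨a, ha, hd⟩ := exists_descent_of_ne_one (Ne.symm hw)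
    have := card_inversions_mul_simpleT_of_gt ha hd
    omega
  | succ k ih =>
    have hw : w ≠ 1 := by
      rintro rfl
      simp at h
    obtain ⟨a, ha, hd⟩ := exists_descent_of_ne_one hw
    have hk := card_inversions_mul_simpleT_of_gt ha hd
    obtain ⟨l, hl, hlen⟩ := ih (w * simpleT n a) (by omega)
    refine ⟨l ++ [a], ?_, by simp [hlen]⟩
    rw [wordProd_concat, hl, mul_assoc, simpleT_mul_self, mul_one]

theorem len_le_length {l : List ℕ} (h : wordProd n l = w) : len n w ≤ l.length :=
  Nat.sInf_le ⟨l, rfl, h⟩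

theorem len_eq_card_inversions (w : Perm (Fin n)) : len n w = #(inversions w) := by
  obtain ⟨l, hl, hlen⟩ := exists_wordProd_length_eq_card_inversions w
  refine le_antisymm (hlen ▸ len_le_length hl) ?_
  obtain ⟨l', hl'len, hl'⟩ :=
    Nat.sInf_mem (s := {p | ∃ l, l.length = p ∧ wordProd n l = w}) ⟨l.length, l, rfl, hl⟩
  rw [len, ← hl'len]
  exact card_inversions_le_length hl'

theorem len_mul_simpleT_of_lt (ha : a + 1 < n) (h : w ⟨a, by omega⟩ < w ⟨a + 1, ha⟩) :
    len n (w * simpleT n a) = len n w + 1 := by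
  simp only [len_eq_card_inversions, card_inversions_mul_simpleT_of_lt ha h]

theorem len_mul_simpleT_of_gt (ha : a + 1 < n) (h : w ⟨a + 1, ha⟩ < w ⟨a, by omega⟩) :
    len n (w * simpleT n a) + 1 = len n w := by
  simp only [len_eq_card_inversions, card_inversions_mul_simpleT_of_gt ha h]

theorem len_inv (w : Perm (Fin n)) : len n w⁻¹ = len n w := by
  simp only [len_eq_card_inversions, card_inversions_inv]

theorem len_lt_len_mul_simpleT_iff (ha : a + 1 < n) :
    len n w < len n (w * simpleT n a) ↔ w ⟨a, by omega⟩ < w ⟨a + 1, ha⟩ := by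
  rcases lt_or_gt_of_ne (w.injective.ne (covBy_mk_succ ha).1.ne) with h | h
  · simp [h, len_mul_simpleT_of_lt ha h]
  · have := len_mul_simpleT_of_gt ha h
    simp only [h.not_gt, iff_false]
    omega

end Length

section Demazure

variable {n a : ℕ} {w z : Perm (Fin n)}

theorem demStepR_eq_ite (ha : a + 1 < n) :
    demStepR n w a = if w ⟨a, by omega⟩ < w ⟨a + 1, ha⟩ then w * simpleT n a else w := by
  unfold demStepR
  exact if_congr (len_lt_len_mul_simpleT_iff ha) rfl rfl

theorem demStepL_eq_ite (ha : a + 1 < n) :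
    demStepL n a w =
      if w⁻¹ ⟨a, by omega⟩ < w⁻¹ ⟨a + 1, ha⟩ then simpleT n a * w else w := by
  unfold demStepL
  rw [← len_inv (simpleT n a * w), ← len_inv w, mul_inv_rev, simpleT_inv]
  exact if_congr (len_lt_len_mul_simpleT_iff ha) rfl rfl

theorem demStepR_of_not_lt (ha : ¬a + 1 < n) : demStepR n w a = w := by
  simp [demStepR, simpleT_of_not_lt ha]

theorem demStepL_of_not_lt (ha : ¬a + 1 < n) : demStepL n a w = w := by
  simp [demStepL, simpleT_of_not_lt ha]

theorem demStepR_one (a : ℕ) : demStepR n 1 a = simpleT n a := by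
  by_cases ha : a + 1 < n
  · rw [demStepR_eq_ite ha, Perm.one_apply, Perm.one_apply, if_pos (covBy_mk_succ ha).1,
      one_mul]
  · rw [demStepR_of_not_lt ha, simpleT_of_not_lt ha]

theorem demStepL_one (a : ℕ) : demStepL n a 1 = simpleT n a := by
  by_cases ha : a + 1 < n
  · rw [demStepL_eq_ite ha, inv_one, Perm.one_apply, Perm.one_apply,
      if_pos (covBy_mk_succ ha).1, mul_one]
  · rw [demStepL_of_not_lt ha, simpleT_of_not_lt ha]

theorem demStepR_demStepL_comm (a b : ℕ) (u : Perm (Fin n)) :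
    demStepR n (demStepL n a u) b = demStepL n a (demStepR n u b) := by
  by_cases ha : a + 1 < n
  swap
  · simp only [demStepL_of_not_lt ha]
  by_cases hb : b + 1 < n
  swap
  · simp only [demStepR_of_not_lt hb]
  rw [demStepL_eq_ite ha, demStepR_eq_ite hb, demStepR_eq_ite hb, demStepL_eq_ite ha,
    simpleT_eq_swap ha, simpleT_eq_swap hb]
  set A : Fin n := ⟨a, by omega⟩
  set A' : Fin n := ⟨a + 1, ha⟩
  set B : Fin n := ⟨b, by omega⟩
  set B' : Fin n := ⟨b + 1, hb⟩
  have hA : A ⋖ A' := covBy_mk_succ ha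
  have hB : B ⋖ B' := covBy_mk_succ hb
  have hS : (u⁻¹ A = B ∧ u⁻¹ A' = B') ↔ (u B = A ∧ u B' = A') := by
    rw [Perm.inv_eq_iff_eq, Perm.inv_eq_iff_eq, eq_comm (a := A), eq_comm (a := A')]
  have hleft (hL : u⁻¹ A < u⁻¹ A') := swap_mul_apply_lt_iff_of_covBy (u := u) hA hB hL
  have hright (hR : u B < u B') : (u * swap B B')⁻¹ A < (u * swap B B')⁻¹ A' ↔
      u⁻¹ A < u⁻¹ A' ∧ ¬(u B = A ∧ u B' = A') := by
    rw [mul_inv_rev, swap_inv, swap_mul_apply_lt_iff_of_covBy hB hA (by rwa [inv_inv]), hS]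
  have hcomm (hS : u B = A ∧ u B' = A') : swap A A' * u = u * swap B B' := by
    rw [mul_swap_eq_swap_mul, hS.1, hS.2]
  by_cases hL : u⁻¹ A < u⁻¹ A'
  · rw [if_pos hL]
    by_cases hR : u B < u B'
    · rw [if_pos hR]
      by_cases hS : u B = A ∧ u B' = A'
      · rw [if_neg fun h => ((hleft hL).1 h).2 hS, if_neg fun h => ((hright hR).1 h).2 hS,
          hcomm hS]
      · rw [if_pos ((hleft hL).2 ⟨hR, hS⟩), if_pos ((hright hR).2 ⟨hL, hS⟩), mul_assoc]
    · rw [if_neg hR, if_neg fun h => hR ((hleft hL).1 h).1, if_pos hL]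
  · rw [if_neg hL]
    by_cases hR : u B < u B'
    · rw [if_pos hR, if_neg fun h => hL ((hright hR).1 h).1]
    · rw [if_neg hR, if_neg hL]

theorem foldl_demStepR_demStepL (a : ℕ) (l : List ℕ) (u : Perm (Fin n)) :
    l.foldl (demStepR n) (demStepL n a u) = demStepL n a (l.foldl (demStepR n) u) := by
  induction l generalizing u with
  | nil => rfl
  | cons b l ih => rw [List.foldl_cons, List.foldl_cons, demStepR_demStepL_comm, ih]

noncomputable def demConj (n a : ℕ) (z : Perm (Fin n)) : Perm (Fin n) :=
  demStepL n a (demStepR n z a)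

theorem demWord_palindrome_concat (l : List ℕ) (a : ℕ) :
    demWord n ((l ++ [a]).reverse ++ (l ++ [a])) =
      demConj n a (demWord n (l.reverse ++ l)) := by
  rw [List.reverse_concat, List.cons_append, ← List.append_assoc, demWord, List.foldl_cons,
    demStepR_one, ← demStepL_one, foldl_demStepR_demStepL, List.foldl_append]
  rfl

theorem demConj_of_not_lt (ha : ¬a + 1 < n) : demConj n a z = z := by
  rw [demConj, demStepR_of_not_lt ha, demStepL_of_not_lt ha]

theorem demConj_of_gt (hz : z * z = 1) (ha : a + 1 < n)
    (h : z ⟨a + 1, ha⟩ < z ⟨a, by omega⟩) : demConj n a z = z := by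
  rw [demConj, demStepR_eq_ite ha, if_neg h.not_gt, demStepL_eq_ite ha,
    inv_eq_of_mul_eq_one_right hz, if_neg h.not_gt]

theorem demConj_of_fixed (ha : a + 1 < n) (h : z ⟨a, by omega⟩ = ⟨a, by omega⟩)
    (h' : z ⟨a + 1, ha⟩ = ⟨a + 1, ha⟩) : demConj n a z = z * simpleT n a := by
  have hA := covBy_mk_succ ha
  rw [demConj, demStepR_eq_ite ha, h, h', if_pos hA.1, demStepL_eq_ite ha, mul_inv_rev,
    simpleT_inv, Perm.mul_apply, Perm.mul_apply, Perm.inv_eq_iff_eq.2 h.symm,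
    Perm.inv_eq_iff_eq.2 h'.symm, simpleT_eq_swap ha, swap_apply_left, swap_apply_right,
    if_neg hA.1.not_gt]

theorem demConj_of_lt (hz : z * z = 1) (ha : a + 1 < n) (h : z ⟨a, by omega⟩ < z ⟨a + 1, ha⟩)
    (hne : ¬(z ⟨a, by omega⟩ = ⟨a, by omega⟩ ∧ z ⟨a + 1, ha⟩ = ⟨a + 1, ha⟩)) :
    demConj n a z = simpleT n a * z * simpleT n a := by
  rw [demConj, demStepR_eq_ite ha, if_pos h, demStepL_eq_ite ha, mul_inv_rev, simpleT_inv,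
    inv_eq_of_mul_eq_one_right hz, Perm.mul_apply, Perm.mul_apply, simpleT_eq_swap ha,
    if_pos (swap_lt_swap_of_covBy (covBy_mk_succ ha) h hne), mul_assoc]

theorem demConj_mul_self (hz : z * z = 1) (a : ℕ) : demConj n a z * demConj n a z = 1 := by
  by_cases ha : a + 1 < n
  swap
  · rwa [demConj_of_not_lt ha]
  rcases lt_or_gt_of_ne (z.injective.ne (covBy_mk_succ ha).1.ne) with h | h
  · by_cases hfix : z ⟨a, by omega⟩ = ⟨a, by omega⟩ ∧ z ⟨a + 1, ha⟩ = ⟨a + 1, ha⟩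
    · have hcomm : z * simpleT n a = simpleT n a * z := by
        rw [simpleT_eq_swap ha, mul_swap_eq_swap_mul, hfix.1, hfix.2]
      rw [demConj_of_fixed ha hfix.1 hfix.2]
      calc z * simpleT n a * (z * simpleT n a) = z * (simpleT n a * z) * simpleT n a := by group
        _ = z * z * (simpleT n a * simpleT n a) := by rw [← hcomm]; group
        _ = 1 := by rw [hz, simpleT_mul_self, one_mul]
    · rw [demConj_of_lt hz ha h hfix]
      calc simpleT n a * z * simpleT n a * (simpleT n a * z * simpleT n a)
          = simpleT n a * (z * (simpleT n a * simpleT n a) * z) * simpleT n a := by group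
        _ = 1 := by rw [simpleT_mul_self, mul_one, hz, mul_one, simpleT_mul_self]
  · rwa [demConj_of_gt hz ha h]

theorem demWord_palindrome_mul_self (l : List ℕ) :
    demWord n (l.reverse ++ l) * demWord n (l.reverse ++ l) = 1 := by
  induction l using List.reverseRecOn with
  | nil => rfl
  | append_singleton l a ih =>
    rw [demWord_palindrome_concat]
    exact demConj_mul_self ih a

end Demazure

namespace DemSelf

variable {n : ℕ} {v w y z : Perm (Fin n)}

theorem mul_self (h : DemSelf n w y) : y * y = 1 := by
  obtain ⟨l, -, -, rfl⟩ := h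
  exact demWord_palindrome_mul_self l

theorem exists_isAtomOf (h : DemSelf n v z) : ∃ w, IsAtomOf n z w := by
  have hex : ∃ p, ∃ w, DemSelf n w z ∧ len n w = p := ⟨_, v, h, rfl⟩
  obtain ⟨w, hw, hlen⟩ := Nat.find_spec hex
  exact ⟨w, hw, fun w' hw' => hlen ▸ Nat.find_min' hex ⟨w', hw', rfl⟩⟩

theorem mul_simpleT {a : ℕ} (h : DemSelf n v z) (ha : a + 1 < n)
    (hasc : v ⟨a, by omega⟩ < v ⟨a + 1, ha⟩) :
    DemSelf n (v * simpleT n a) (demConj n a z) := by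
  obtain ⟨l, rfl, hlen, rfl⟩ := h
  refine ⟨l ++ [a], wordProd_concat l a, ?_, demWord_palindrome_concat l a⟩
  rw [len_mul_simpleT_of_lt ha hasc, List.length_append, hlen, List.length_singleton]

theorem eq_one_or_exists_mul_simpleT (h : DemSelf n w y) :
    w = 1 ∧ y = 1 ∨ ∃ a, ∃ ha : a + 1 < n, ∃ w' z, DemSelf n w' z ∧
      w' ⟨a, by omega⟩ < w' ⟨a + 1, ha⟩ ∧ w = w' * simpleT n a ∧ y = demConj n a z := by
  obtain ⟨l, rfl, hlen, rfl⟩ := h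
  rcases l.eq_nil_or_concat' with rfl | ⟨l, a, rfl⟩
  · exact Or.inl ⟨rfl, rfl⟩
  right
  rw [wordProd_concat] at hlen ⊢
  have hle : len n (wordProd n l) ≤ l.length := len_le_length rfl
  simp only [List.length_append, List.length_singleton] at hlen
  have ha : a + 1 < n := by
    by_contra ha
    rw [simpleT_of_not_lt ha, mul_one] at hlen
    omega
  have hasc : wordProd n l ⟨a, by omega⟩ < wordProd n l ⟨a + 1, ha⟩ := by
    refine lt_of_le_of_ne (not_lt.1 fun hgt => ?_)
      ((wordProd n l).injective.ne (covBy_mk_succ ha).1.ne)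
    have := len_mul_simpleT_of_gt ha hgt
    omega
  have hred : l.length = len n (wordProd n l) := by
    have := len_mul_simpleT_of_lt ha hasc
    omega
  exact ⟨a, ha, _, _, ⟨l, rfl, hred, rfl⟩, hasc, rfl, demWord_palindrome_concat l a⟩

end DemSelf

section Cycles

variable {α : Type*} [LinearOrder α] {w y z : Perm α} {a b x x' : α}

theorem cycle_mul_swap_of_fixed (hz : z * z = 1) (hab : a ⋖ b) (ha : z a = a) (hb : z b = b)
    ⦃i j : α⦄ (hij : (z * swap a b) i = j) (hle : i ≤ j) :
    i = a ∧ j = b ∨ z i = j ∧ i ≠ a ∧ i ≠ b ∧ j ≠ a ∧ j ≠ b := by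
  rw [Perm.mul_apply] at hij
  by_cases hia : i = a
  · subst hia
    rw [swap_apply_left, hb] at hij
    exact Or.inl ⟨rfl, hij.symm⟩
  by_cases hib : i = b
  · subst hib
    rw [swap_apply_right, ha] at hij
    exact absurd (hij ▸ hle) hab.1.not_ge
  rw [swap_apply_of_ne_of_ne hia hib] at hij
  refine Or.inr ⟨hij, hia, hib, fun hja => hia ?_, fun hjb => hib ?_⟩
  · rw [← Perm.apply_apply_of_mul_self hz i, hij, hja, ha]
  · rw [← Perm.apply_apply_of_mul_self hz i, hij, hjb, hb]

theorem cycle_conj_swap (hz : z * z = 1) (hab : a ⋖ b) (hlt : z a < z b) ⦃i j : α⦄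
    (hij : (swap a b * z * swap a b) i = j) (hle : i ≤ j) :
    z (swap a b i) = swap a b j ∧ swap a b i ≤ swap a b j := by
  have hz' : z (swap a b i) = swap a b j := by
    rw [← hij, Perm.mul_apply, Perm.mul_apply, swap_apply_self]
  refine ⟨hz', ?_⟩
  rcases hle.lt_or_eq with hij' | rfl
  · rcases swap_lt_swap_or_of_covBy hab hij' with h | ⟨hia, hjb⟩
    · exact h.le
    subst i j
    rw [swap_apply_left, swap_apply_right] at hz'
    have hza : z a = b := by rw [← hz', Perm.apply_apply_of_mul_self hz]
    rw [hza, hz'] at hlt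
    exact absurd hlt hab.1.not_gt
  · exact le_rfl

structure CycleCompatible (w y : Perm α) : Prop where
  snd_le_fst ⦃i j : α⦄ : y i = j → i ≤ j → w j ≤ w i
  fst_lt_snd ⦃i j i' j' : α⦄ : y i = j → i ≤ j → y i' = j' → i' ≤ j' → i < i' → j < j' →
    w i < w j'
  nested ⦃i j i' j' : α⦄ : y i = j → i ≤ j → y i' = j' → i' ≤ j' → i < i' → j' < j →
    w i' < w j ∨ w i < w j' ∨ (w j' < w j ∧ w i < w i')

theorem cycleCompatible_one : CycleCompatible (1 : Perm α) 1 where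
  snd_le_fst i j h _ := h ▸ le_rfl
  fst_lt_snd i j i' j' _ _ h' _ hii' _ := h' ▸ hii'
  nested i j i' j' h _ h' _ hii' hj'j := by
    subst h h'
    exact absurd (hii'.trans hj'j) (lt_irrefl i)

namespace CycleCompatible

theorem apply_le_apply_min (h : CycleCompatible w z) (hz : z * z = 1) (x : α) :
    w x ≤ w (min x (z x)) := by
  rcases le_total x (z x) with hx | hx
  · rw [min_eq_left hx]
  · rw [min_eq_right hx]
    exact h.snd_le_fst (Perm.apply_apply_of_mul_self hz x) hx

theorem apply_max_le_apply (h : CycleCompatible w z) (x : α) : w (max x (z x)) ≤ w x := by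
  rcases le_total x (z x) with hx | hx
  · rw [max_eq_right hx]
    exact h.snd_le_fst rfl hx
  · rw [max_eq_left hx]

theorem apply_lt_apply (h : CycleCompatible w z) (hz : z * z = 1) (hxx' : x < x')
    (hzxx' : z x < z x') : w x < w x' :=
  calc w x ≤ w (min x (z x)) := h.apply_le_apply_min hz x
    _ < w (max x' (z x')) :=
      h.fst_lt_snd (Perm.apply_min_eq_max_of_mul_self hz x) min_le_max
        (Perm.apply_min_eq_max_of_mul_self hz x') min_le_max
        (lt_min ((min_le_left _ _).trans_lt hxx') ((min_le_right _ _).trans_lt hzxx'))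
        (max_lt (hxx'.trans_le (le_max_left _ _)) (hzxx'.trans_le (le_max_right _ _)))
    _ ≤ w x' := h.apply_max_le_apply x'

theorem cycle_conditions (h : CycleCompatible w y) (hy : y * y = 1) {i j : α} (hij : i ≤ j)
    (hc : y i = j) : w j ≤ w i ∧ ¬∃ k, i < k ∧ k < j ∧ w j < w k ∧ w k < w i := by
  refine ⟨h.snd_le_fst hc hij, ?_⟩
  rintro ⟨k, hik, hkj, hjk, hki⟩
  have hyj : y j = i := hc ▸ Perm.apply_apply_of_mul_self hy i
  have hyk := Perm.apply_apply_of_mul_self hy k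
  -- the cycle of `k` is nested in `(i, j)`
  have hiyk : i < y k := by
    refine lt_of_le_of_ne (not_lt.1 fun hlt => ?_) fun he => hkj.ne ?_
    · exact hjk.not_gt (h.apply_lt_apply hy hkj (hyj ▸ hlt))
    · rw [← hyk, ← he, hc]
  have hykj : y k < j := by
    refine lt_of_le_of_ne (not_lt.1 fun hlt => ?_) fun he => hik.ne' ?_
    · exact hki.not_gt (h.apply_lt_apply hy hik (hc ▸ hlt))
    · rw [← hyk, he, hyj]
  rcases le_total k (y k) with hk | hk
  · have hle := h.snd_le_fst rfl hk
    rcases h.nested hc hij rfl hk hik hykj with h' | h' | h'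
    · exact h'.not_gt hjk
    · exact (h'.trans_le hle).not_gt hki
    · exact h'.2.not_gt hki
  · have hle := h.snd_le_fst hyk hk
    rcases h.nested hc hij hyk hk hiyk hkj with h' | h' | h'
    · exact (hle.trans_lt h').not_gt hjk
    · exact h'.not_gt hki
    · exact h'.1.not_gt hjk

theorem mul_swap_of_fixed (h : CycleCompatible w z) (hz : z * z = 1) (hab : a ⋖ b)
    (ha : z a = a) (hb : z b = b) (hw : w a < w b) :
    CycleCompatible (w * swap a b) (z * swap a b) := by
  have hcycle := cycle_mul_swap_of_fixed hz hab ha hb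
  have hwa : (w * swap a b) a = w b := by rw [Perm.mul_apply, swap_apply_left]
  have hwb : (w * swap a b) b = w a := by rw [Perm.mul_apply, swap_apply_right]
  have hw' : ∀ x, x ≠ a → x ≠ b → (w * swap a b) x = w x := fun x hxa hxb => by
    rw [Perm.mul_apply, swap_apply_of_ne_of_ne hxa hxb]
  constructor
  · intro i j hij hle
    rcases hcycle hij hle with ⟨rfl, rfl⟩ | ⟨hzij, hia, hib, hja, hjb⟩
    · rw [hwa, hwb]
      exact hw.le
    · rw [hw' i hia hib, hw' j hja hjb]
      exact h.snd_le_fst hzij hle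
  · intro i j i' j' hij hle hij' hle' hii' hjj'
    rcases hcycle hij hle with ⟨rfl, rfl⟩ | ⟨hzij, hia, hib, hja, hjb⟩ <;>
      rcases hcycle hij' hle' with ⟨rfl, rfl⟩ | ⟨hzij', hia', hib', hja', hjb'⟩
    · exact absurd hii' (lt_irrefl _)
    · rw [hwa, hw' j' hja' hjb']
      have hbi' := (hab.ge_of_gt hii').lt_of_ne (Ne.symm hib')
      exact h.fst_lt_snd hb le_rfl hzij' hle' hbi' (hbi'.trans_le hle')
    · rw [hwb, hw' i hia hib]
      exact h.fst_lt_snd hzij hle ha le_rfl hii' ((hab.le_of_lt hjj').lt_of_ne hja)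
    · rw [hw' i hia hib, hw' j' hja' hjb']
      exact h.fst_lt_snd hzij hle hzij' hle' hii' hjj'
  · intro i j i' j' hij hle hij' hle' hii' hj'j
    rcases hcycle hij hle with ⟨rfl, rfl⟩ | ⟨hzij, hia, hib, hja, hjb⟩ <;>
      rcases hcycle hij' hle' with ⟨rfl, rfl⟩ | ⟨hzij', hia', hib', hja', hjb'⟩
    · exact absurd hii' (lt_irrefl _)
    · exact absurd (hab.le_of_lt (hle'.trans_lt hj'j)) hii'.not_ge
    · rw [hwa, hwb, hw' i hia hib, hw' j hja hjb]
      have := h.nested hzij hle ha le_rfl hii' (hab.1.trans hj'j)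
      have := h.nested hzij hle hb le_rfl (hii'.trans hab.1) hj'j
      tauto
    · rw [hw' i hia hib, hw' j hja hjb, hw' i' hia' hib', hw' j' hja' hjb']
      exact h.nested hzij hle hzij' hle' hii' hj'j

theorem apply_swap_lt_apply_swap_of_conj (h : CycleCompatible w z) (hz : z * z = 1)
    (hab : a ⋖ b) (hlt : z a < z b) (hne : ¬(z a = a ∧ z b = b)) ⦃i j i' j' : α⦄
    (hij : (swap a b * z * swap a b) i = j) (hle : i ≤ j)
    (hij' : (swap a b * z * swap a b) i' = j') (hle' : i' ≤ j') (hii' : i < i') (hjj' : j < j') :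
    w (swap a b i) < w (swap a b j') := by
  have hinv : ∀ {x y}, z x = y → z y = x := fun hxy => by
    rw [← hxy, Perm.apply_apply_of_mul_self hz]
  obtain ⟨hzij, hσ⟩ := cycle_conj_swap hz hab hlt hij hle
  obtain ⟨hzij', hσ'⟩ := cycle_conj_swap hz hab hlt hij' hle'
  rcases swap_lt_swap_or_of_covBy hab hii' with hii' | ⟨hia, hi'b⟩ <;>
    rcases swap_lt_swap_or_of_covBy hab hjj' with hjj' | ⟨hja, hj'b⟩
  · exact h.fst_lt_snd hzij hσ hzij' hσ' hii' hjj'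
  · subst hja hj'b
    rw [swap_apply_left] at hzij
    rw [swap_apply_right] at hzij'
    rw [hinv hzij, hinv hzij'] at hlt
    exact absurd hlt hii'.not_gt
  · subst hia hi'b
    rw [swap_apply_left] at hzij
    rw [swap_apply_right] at hzij'
    rw [hzij, hzij'] at hlt
    exact absurd hlt hjj'.not_gt
  · subst hia hi'b hja hj'b
    rw [swap_apply_left] at hzij
    rw [swap_apply_right] at hzij'
    exact absurd ⟨hzij', hzij⟩ hne

theorem conj_swap (h : CycleCompatible w z) (hz : z * z = 1) (hab : a ⋖ b) (hlt : z a < z b)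
    (hne : ¬(z a = a ∧ z b = b)) :
    CycleCompatible (w * swap a b) (swap a b * z * swap a b) where
  snd_le_fst i j hij hle :=
    have hcycle := cycle_conj_swap hz hab hlt hij hle
    h.snd_le_fst hcycle.1 hcycle.2
  fst_lt_snd := h.apply_swap_lt_apply_swap_of_conj hz hab hlt hne
  nested i j i' j' hij hle hij' hle' hii' hj'j := by
    obtain ⟨hzij, hσ⟩ := cycle_conj_swap hz hab hlt hij hle
    obtain ⟨hzij', hσ'⟩ := cycle_conj_swap hz hab hlt hij' hle'
    have hσab : swap a b b < swap a b a := by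
      rw [swap_apply_left, swap_apply_right]
      exact hab.1
    rcases swap_lt_swap_or_of_covBy hab hii' with hii' | ⟨hia, hi'b⟩ <;>
      rcases swap_lt_swap_or_of_covBy hab hj'j with hj'j | ⟨hj'a, hjb⟩
    · exact h.nested hzij hσ hzij' hσ' hii' hj'j
    · subst hj'a hjb
      exact Or.inr (Or.inl (h.fst_lt_snd hzij hσ hzij' hσ' hii' hσab))
    · subst hia hi'b
      exact Or.inl (h.fst_lt_snd hzij' hσ' hzij hσ hσab hj'j)
    · subst hi'b hj'a
      exact absurd hle' hab.1.not_ge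

end CycleCompatible

end Cycles

theorem IsAtomOf.cycleCompatible {n : ℕ} {y w : Perm (Fin n)} (hw : IsAtomOf n y w) :
    CycleCompatible w y := by
  induction hlen : len n w using Nat.strong_induction_on generalizing w y with
  | _ p ih =>
  obtain ⟨hd, hmin⟩ := hw
  rcases hd.eq_one_or_exists_mul_simpleT with ⟨rfl, rfl⟩ | ⟨a, ha, w', z, hd', hasc, rfl, rfl⟩
  · exact cycleCompatible_one
  have hz := hd'.mul_self
  have hab := covBy_mk_succ ha
  have hlen' := len_mul_simpleT_of_lt ha hasc
  rcases lt_or_gt_of_ne (z.injective.ne hab.1.ne) with hlt | hgt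
  · obtain ⟨v, hv⟩ := hd'.exists_isAtomOf
    have hvw' := hv.2 w' hd'
    have hvasc := (ih _ (by omega) hv rfl).apply_lt_apply hz hab.1 hlt
    have hwv := hmin _ (hv.1.mul_simpleT ha hvasc)
    rw [len_mul_simpleT_of_lt ha hvasc] at hwv
    have hw' : IsAtomOf n z w' := ⟨hd', fun u hu => by have := hv.2 u hu; omega⟩
    have hcomp := ih _ (by omega) hw' rfl
    by_cases hfix : z ⟨a, by omega⟩ = ⟨a, by omega⟩ ∧ z ⟨a + 1, ha⟩ = ⟨a + 1, ha⟩
    · rw [demConj_of_fixed ha hfix.1 hfix.2, simpleT_eq_swap ha]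
      exact hcomp.mul_swap_of_fixed hz hab hfix.1 hfix.2 hasc
    · rw [demConj_of_lt hz ha hlt hfix, simpleT_eq_swap ha]
      exact hcomp.conj_swap hz hab hlt hfix
  · rw [demConj_of_gt hz ha hgt] at hmin
    have := hmin w' hd'
    omega

theorem atom_cycle_conditions_general (n : ℕ) (y w : Equiv.Perm (Fin n))
    (hw : IsAtomOf n y w) (i j : Fin n) (hij : i ≤ j) (hc : y i = j) :
    w j ≤ w i ∧ ¬ ∃ k : Fin n, i < k ∧ k < j ∧ w j < w k ∧ w k < w i :=
  hw.cycleCompatible.cycle_conditions hw.1.mul_self hij hc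

/-- For an atom `w` of an involution `y` and a cycle `(i,j)` of `y` with `i ≤ j`:
`w(i) ≥ w(j)` and there is no `i < k < j` with `w(i) > w(k) > w(j)`. -/
theorem atom_cycle_conditions (n : ℕ) (y w : Equiv.Perm (Fin n)) (hy : y * y = 1)
    (hw : IsAtomOf n y w) (i j : Fin n) (hij : i ≤ j) (hc : y i = j) :
    w j ≤ w i ∧ ¬ ∃ k : Fin n, i < k ∧ k < j ∧ w j < w k ∧ w k < w i :=
  atom_cycle_conditions_general n y w hw i j hij hc
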